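/- Let n ≥ 1 be a natural number and p, q ∈ [0,1], and set r := (1−q)³. For v : Fin n → Bool and ω : {(i,j) : Fin n × Fin n // i < j} → Bool define the weight W(v,ω) := (∏_{i} (if v(i) = true then r else 1−r)) · (∏_{(i,j), i<j} (if ω(i,j) = true then p else 1−p)), let G(ω) be the simple graph on Fin n in which distinct i, j are adjacent iff ω evaluated at (min(i,j), max(i,j)) is true, and let G(ω)[v] be the subgraph of G(ω) induced on the vertex set {i : v(i) = true}. Then Σ_{(v,ω) such that G(ω)[v] is not preconnected} W(v,ω) ≤ Σ_{m=0}^{n} (n choose m) · (1−q)^{3m} · (1−(1−q)³)^{n−m} · Σ_{k=1}^{⌊m/2⌋} (m choose k) · (1−p)^{k(m−k)}. -/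

import Mathlib

/-- The simple graph on `Fin n` determined by the edge indicator
`ω : {(i,j) : i < j} → Bool`: distinct vertices `i, j` are adjacent iff
`ω` evaluated at `(min i j, max i j)` is `true`. -/
def graphOf {n : ℕ} (ω : {ij : Fin n × Fin n // ij.1 < ij.2} → Bool) :
    SimpleGraph (Fin n) where
  Adj i j := ∃ h : min i j < max i j, ω ⟨(min i j, max i j), h⟩ = true
  symm := by
    constructor
    intro i j hij
    rwa [min_comm j i, max_comm j i]
  loopless := by
    constructor
    intro i hi
    obtain ⟨h, -⟩ := hi
    simp at h

/-- The joint weight of a vertex-retention indicator `v` (each vertex independently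
retained with probability `r`) and an edge configuration `ω` (each potential edge
independently present with probability `p`). -/
noncomputable def jointWeight {n : ℕ} (r p : ℝ) (v : Fin n → Bool)
    (ω : {ij : Fin n × Fin n // ij.1 < ij.2} → Bool) : ℝ :=
  (∏ i, (if v i = true then r else 1 - r)) *
    ∏ e : {ij : Fin n × Fin n // ij.1 < ij.2}, (if ω e = true then p else 1 - p)

/-!
Condition on the set `S` of retained vertices, with `m = #S`. If the graph induced on `S` is
disconnected, some `T ⊆ S` with `1 ≤ #T ≤ m / 2` (a component, or the complement of one) has no
edge to `S \ T`. The `#T * (m - #T)` potential edges between `T` and `S \ T` are independently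
absent with probability `1 - p` each, so the union bound over `T` gives
`∑_{k = 1}^{m / 2} C(m, k) (1 - p)^(k (m - k))`. Averaging over `S`, whose size is
binomially distributed with parameters `n` and `(1 - q)³`, gives the bound.
-/

open Finset

section BernoulliWeight

variable {ι : Type*} [Fintype ι]

noncomputable def bernoulliWeight (p : ℝ) (ω : ι → Bool) : ℝ :=
  ∏ i, if ω i = true then p else 1 - p

theorem bernoulliWeight_nonneg {p : ℝ} (hp₀ : 0 ≤ p) (hp₁ : p ≤ 1) (ω : ι → Bool) :
    0 ≤ bernoulliWeight p ω :=
  prod_nonneg fun i _ => by split <;> linarith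

theorem bernoulliWeight_eq_pow_mul_pow (p : ℝ) (ω : ι → Bool) :
    bernoulliWeight p ω =
      p ^ #{i | ω i = true} * (1 - p) ^ (Fintype.card ι - #{i | ω i = true}) := by
  classical
  rw [bernoulliWeight, prod_ite, prod_const, prod_const, ← card_compl, compl_filter]

variable [DecidableEq ι]

theorem sum_bernoulliWeight_of_forall_eq_false (p : ℝ) (C : Finset ι) :
    ∑ ω with ∀ i ∈ C, ω i = false, bernoulliWeight p ω = (1 - p) ^ #C := by
  have hfilter : ({ω | ∀ i ∈ C, ω i = false} : Finset (ι → Bool)) =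
      Fintype.piFinset fun i => if i ∈ C then {false} else univ := by
    ext ω
    simp only [mem_filter, mem_univ, true_and, Fintype.mem_piFinset]
    refine ⟨fun h i => ?_, fun h i hi => by simpa [hi] using h i⟩
    split_ifs with hi <;> simp [h i, hi]
  calc ∑ ω with ∀ i ∈ C, ω i = false, bernoulliWeight p ω
      = ∏ i, ∑ b ∈ if i ∈ C then {false} else univ, if b = true then p else 1 - p := by
        rw [hfilter, prod_univ_sum]; rfl
    _ = ∏ i, if i ∈ C then 1 - p else 1 :=
        prod_congr rfl fun i _ => by split_ifs <;> simp
    _ = (1 - p) ^ #C := by rw [prod_ite_mem univ C, univ_inter, prod_const]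

theorem Fintype.sum_fun_bool_eq_sum_finset {M : Type*} [AddCommMonoid M] (g : Finset ι → M) :
    ∑ v : ι → Bool, g {i | v i = true} = ∑ s : Finset ι, g s :=
  Fintype.sum_bijective (fun v : ι → Bool => ({i | v i = true} : Finset ι))
    ⟨fun v w h => funext fun i => by simpa using congr(i ∈ $h),
      fun s : Finset ι => ⟨fun i => decide (i ∈ s), by ext; simp⟩⟩ _ _ fun _ => rfl

theorem sum_bernoulliWeight_mul_apply_card (r : ℝ) (F : ℕ → ℝ) :
    ∑ v : ι → Bool, bernoulliWeight r v * F #{i | v i = true} =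
      ∑ m ∈ range (Fintype.card ι + 1),
        (Fintype.card ι).choose m * r ^ m * (1 - r) ^ (Fintype.card ι - m) * F m := by
  simp_rw [bernoulliWeight_eq_pow_mul_pow]
  rw [Fintype.sum_fun_bool_eq_sum_finset
    (fun s => r ^ #s * (1 - r) ^ (Fintype.card ι - #s) * F #s), ← powerset_univ,
    sum_powerset_apply_card (fun m => r ^ m * (1 - r) ^ (Fintype.card ι - m) * F m), card_univ]
  simp only [nsmul_eq_mul, mul_assoc]

end BernoulliWeight

theorem Finset.sum_biUnion_le_sum_sum {α β : Type*} [DecidableEq α] {w : α → ℝ}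
    (hw : ∀ a, 0 ≤ w a) (I : Finset β) (E : β → Finset α) :
    ∑ a ∈ I.biUnion E, w a ≤ ∑ b ∈ I, ∑ a ∈ E b, w a := by
  rw [← sup_eq_biUnion]
  refine apply_sup_le_sum (f := fun s => ∑ a ∈ s, w a) sum_empty (fun {s t} => ?_) I
  rw [← sum_union_inter]
  exact le_add_of_nonneg_right (sum_nonneg fun a _ => hw a)

def crossPairs {V : Type*} [Fintype V] [LinearOrder V] (A B : Finset V) :
    Finset {ij : V × V // ij.1 < ij.2} :=
  {e | (e.1.1 ∈ A ∧ e.1.2 ∈ B) ∨ (e.1.1 ∈ B ∧ e.1.2 ∈ A)}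

theorem card_mul_card_le_card_crossPairs {V : Type*} [Fintype V] [LinearOrder V]
    {A B : Finset V} (hAB : Disjoint A B) : #A * #B ≤ #(crossPairs A B) := by
  rw [← card_product]
  refine card_le_card_of_surjOn (fun e => if e.1.1 ∈ A then e.1 else e.1.swap) ?_
  rintro ⟨a, b⟩ hab
  obtain ⟨ha, hb⟩ : a ∈ A ∧ b ∈ B := by simpa using hab
  have hb' : b ∉ A := disjoint_right.mp hAB hb
  rcases lt_or_gt_of_ne (ne_of_mem_of_not_mem ha hb') with h | h
  · exact ⟨⟨(a, b), h⟩, by simp [crossPairs, ha, hb], by simp [ha]⟩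
  · exact ⟨⟨(b, a), h⟩, by simp [crossPairs, ha, hb], by simp [hb']⟩

namespace SimpleGraph

variable {V : Type*} [DecidableEq V] {G : SimpleGraph V} {S : Finset V}

theorem exists_cut_of_not_preconnected_induce (h : ¬ (G.induce (S : Set V)).Preconnected) :
    ∃ T ⊆ S, T.Nonempty ∧ (S \ T).Nonempty ∧ ∀ i ∈ T, ∀ j ∈ S \ T, ¬ G.Adj i j := by
  classical
  obtain ⟨a, b, hab⟩ : ∃ a b, ¬ (G.induce (S : Set V)).Reachable a b := by
    simpa [Preconnected] using h
  let T : Finset V := {i ∈ S | ∃ hi : i ∈ S, (G.induce (S : Set V)).Reachable a ⟨i, hi⟩}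
  have hT (i : V) (hi : i ∈ S) : i ∈ T ↔ (G.induce (S : Set V)).Reachable a ⟨i, hi⟩ := by
    simp [T, hi]
  refine ⟨T, filter_subset _ _, ⟨a, (hT a a.2).2 .rfl⟩,
    ⟨b, mem_sdiff.2 ⟨b.2, fun hb => hab ((hT b b.2).1 hb)⟩⟩, fun i hi j hj hij => ?_⟩
  obtain ⟨hjS, hjT⟩ := mem_sdiff.1 hj
  have hiS := filter_subset _ _ hi
  have hij' : (G.induce (S : Set V)).Adj ⟨i, hiS⟩ ⟨j, hjS⟩ := hij
  exact hjT ((hT j hjS).2 (((hT i hiS).1 hi).trans hij'.reachable))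

theorem exists_small_cut_of_not_preconnected_induce
    (h : ¬ (G.induce (S : Set V)).Preconnected) :
    ∃ T ⊆ S, T.Nonempty ∧ 2 * #T ≤ #S ∧ ∀ i ∈ T, ∀ j ∈ S \ T, ¬ G.Adj i j := by
  obtain ⟨T, hTS, hT, hST, hcut⟩ := exists_cut_of_not_preconnected_induce h
  by_cases hsmall : 2 * #T ≤ #S
  · exact ⟨T, hTS, hT, hsmall, hcut⟩
  refine ⟨S \ T, sdiff_subset, hST, ?_, fun i hi j hj hij => ?_⟩
  · rw [card_sdiff_of_subset hTS]
    have := card_le_card hTS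
    omega
  · rw [Finset.sdiff_sdiff_eq_self hTS] at hj
    exact hcut j hj i hi hij.symm

end SimpleGraph

theorem graphOf_adj_of_eq_true {n : ℕ} {ω : {ij : Fin n × Fin n // ij.1 < ij.2} → Bool}
    {e : {ij : Fin n × Fin n // ij.1 < ij.2}} (h : ω e = true) :
    (graphOf ω).Adj e.1.1 e.1.2 := by
  obtain ⟨⟨i, j⟩, hij⟩ := e
  simp only [graphOf, min_eq_left hij.le, max_eq_right hij.le]
  exact ⟨hij, h⟩

open Classical in
theorem sum_bernoulliWeight_not_preconnected_le {n : ℕ} {p : ℝ} (hp₀ : 0 ≤ p) (hp₁ : p ≤ 1)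
    (v : Fin n → Bool) :
    ∑ ω : {ij : Fin n × Fin n // ij.1 < ij.2} → Bool
        with ¬ ((graphOf ω).induce {i | v i = true}).Preconnected, bernoulliWeight p ω ≤
      ∑ k ∈ Icc 1 (#{i | v i = true} / 2),
        ((#{i | v i = true}).choose k : ℝ) * (1 - p) ^ (k * (#{i | v i = true} - k)) := by
  set S : Finset (Fin n) := {i | v i = true}
  let cuts : Finset (Finset (Fin n)) := (Icc 1 (#S / 2)).biUnion (powersetCard · S)
  let noEdgeAcross (T : Finset (Fin n)) : Finset ({ij : Fin n × Fin n // ij.1 < ij.2} → Bool) :=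
    {ω | ∀ e ∈ crossPairs T (S \ T), ω e = false}
  have hcover : ({ω | ¬ ((graphOf ω).induce {i | v i = true}).Preconnected} : Finset _) ⊆
      cuts.biUnion noEdgeAcross := by
    intro ω hω
    have hdisc := (mem_filter.1 hω).2
    rw [← show (S : Set (Fin n)) = {i | v i = true} from coe_filter_univ _] at hdisc
    obtain ⟨T, hTS, hT, hsmall, hcut⟩ :=
      SimpleGraph.exists_small_cut_of_not_preconnected_induce hdisc
    refine mem_biUnion.2 ⟨T, mem_biUnion.2 ⟨#T, mem_Icc.2 ⟨hT.card_pos, by omega⟩,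
      mem_powersetCard.2 ⟨hTS, rfl⟩⟩, mem_filter.2 ⟨mem_univ _, fun e he => ?_⟩⟩
    rw [Bool.eq_false_iff]
    intro hωe
    have hadj := graphOf_adj_of_eq_true hωe
    rcases (mem_filter.1 he).2 with ⟨h₁, h₂⟩ | ⟨h₁, h₂⟩
    · exact hcut _ h₁ _ h₂ hadj
    · exact hcut _ h₂ _ h₁ hadj.symm
  have hw : ∀ ω : {ij : Fin n × Fin n // ij.1 < ij.2} → Bool, 0 ≤ bernoulliWeight p ω :=
    bernoulliWeight_nonneg hp₀ hp₁
  calc _ ≤ ∑ ω ∈ cuts.biUnion noEdgeAcross, bernoulliWeight p ω :=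
        sum_le_sum_of_subset_of_nonneg hcover fun ω _ _ => hw ω
    _ ≤ ∑ T ∈ cuts, ∑ ω ∈ noEdgeAcross T, bernoulliWeight p ω :=
        sum_biUnion_le_sum_sum hw cuts noEdgeAcross
    _ = ∑ T ∈ cuts, (1 - p) ^ #(crossPairs T (S \ T)) :=
        sum_congr rfl fun T _ => sum_bernoulliWeight_of_forall_eq_false p _
    _ ≤ ∑ T ∈ cuts, (1 - p) ^ (#T * (#S - #T)) := by
        refine sum_le_sum fun T hT => pow_le_pow_of_le_one (by linarith) (by linarith) ?_
        obtain ⟨k, -, hTk⟩ := mem_biUnion.1 hT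
        rw [← card_sdiff_of_subset (mem_powersetCard.1 hTk).1]
        exact card_mul_card_le_card_crossPairs disjoint_sdiff
    _ = ∑ k ∈ Icc 1 (#S / 2), ((#S).choose k : ℝ) * (1 - p) ^ (k * (#S - k)) := by
        rw [sum_biUnion fun k _ l _ hkl => pairwise_disjoint_powersetCard S hkl]
        refine sum_congr rfl fun k _ => ?_
        rw [sum_congr rfl fun T hT => by rw [(mem_powersetCard.1 hT).2], sum_const,
          card_powersetCard, nsmul_eq_mul]

open Classical in
theorem ccesa_privacy_failure_bound_general (n : ℕ) (p q : ℝ)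
    (hp : p ∈ Set.Icc (0:ℝ) 1) (hq : q ∈ Set.Icc (0:ℝ) 1) :
    ∑ x ∈ Finset.univ.filter
        (fun x : (Fin n → Bool) × ({ij : Fin n × Fin n // ij.1 < ij.2} → Bool) =>
          ¬ ((graphOf x.2).induce {i | x.1 i = true}).Preconnected),
      jointWeight ((1-q)^3) p x.1 x.2
      ≤ ∑ m ∈ Finset.range (n+1),
          (n.choose m : ℝ) * (1-q)^(3*m) * (1-(1-q)^3)^(n-m) *
            ∑ k ∈ Finset.Icc 1 (m/2), (m.choose k : ℝ) * (1-p)^(k*(m-k)) := by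
  obtain ⟨hp₀, hp₁⟩ := hp
  obtain ⟨hq₀, hq₁⟩ := hq
  set r := (1 - q) ^ 3
  have hr₀ : 0 ≤ r := pow_nonneg (by linarith) 3
  have hr₁ : r ≤ 1 := pow_le_one₀ (by linarith) (by linarith)
  let F (m : ℕ) : ℝ := ∑ k ∈ Icc 1 (m / 2), (m.choose k : ℝ) * (1 - p) ^ (k * (m - k))
  calc _ = ∑ v : Fin n → Bool, bernoulliWeight r v *
        ∑ ω with ¬ ((graphOf ω).induce {i | v i = true}).Preconnected, bernoulliWeight p ω := by
        rw [sum_filter, Fintype.sum_prod_type]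
        refine sum_congr rfl fun v _ => ?_
        rw [mul_sum, sum_filter]
        rfl
    _ ≤ ∑ v : Fin n → Bool, bernoulliWeight r v * F #{i | v i = true} :=
        sum_le_sum fun v _ => mul_le_mul_of_nonneg_left
          (sum_bernoulliWeight_not_preconnected_le hp₀ hp₁ v) (bernoulliWeight_nonneg hr₀ hr₁ v)
    _ = _ := by
        rw [sum_bernoulliWeight_mul_apply_card, Fintype.card_fin]
        refine sum_congr rfl fun m _ => ?_
        rw [← pow_mul]

open Classical in
theorem ccesa_privacy_failure_bound (n : ℕ) (hn : 1 ≤ n) (p q : ℝ)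
    (hp : p ∈ Set.Icc (0:ℝ) 1) (hq : q ∈ Set.Icc (0:ℝ) 1) :
    ∑ x ∈ Finset.univ.filter
        (fun x : (Fin n → Bool) × ({ij : Fin n × Fin n // ij.1 < ij.2} → Bool) =>
          ¬ ((graphOf x.2).induce {i | x.1 i = true}).Preconnected),
      jointWeight ((1-q)^3) p x.1 x.2
      ≤ ∑ m ∈ Finset.range (n+1),
          (n.choose m : ℝ) * (1-q)^(3*m) * (1-(1-q)^3)^(n-m) *
            ∑ k ∈ Finset.Icc 1 (m/2), (m.choose k : ℝ) * (1-p)^(k*(m-k)) :=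
  ccesa_privacy_failure_bound_general n p q hp hq
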